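/- Let c be a forget node of the nice tree decomposition T with child b and B(c) = B(b) \ {v}, v ∈ B(b), and let f ∈ P(Q). Suppose there are a positive integer M such that M·f(K) is an integer for every K ∈ ℛ(c), and binary vectors I_1,…,I_M ∈ {0,1}^(ℛ(b)), each satisfying the constraints relevant to T(b), with f|_b = (1/M) Σ_i I_i. Then there exist binary vectors J_1,…,J_M ∈ {0,1}^(ℛ(c)), each satisfying the constraints relevant to T(c), such that f|_c = (1/M) Σ_i J_i. -/

import Mathlib

/-! Common definitions: CSP instances, configurations, nice tree decompositions,
and the polytopes from Kolman–Koutecký. -/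

/-- A constraint with scope `scope`; its satisfaction depends only on the
coordinates in the scope (it is a relation on the domains of the scope). -/
structure CSPConstraint (n : ℕ) where
  scope : Finset (Fin n)
  sat : (Fin n → ℝ) → Prop
  sat_congr : ∀ z z' : Fin n → ℝ, (∀ v ∈ scope, z v = z' v) → sat z → sat z'

/-- A CSP instance: finite real domains, hard constraints and soft constraints. -/
structure CSPInstance (n : ℕ) where
  dom : Fin n → Finset ℝ
  hard : List (CSPConstraint n)
  soft : List (CSPConstraint n)

variable {n : ℕ}

/-- The list of all constraints (hard and soft). -/
def consList (Q : CSPInstance n) : List (CSPConstraint n) := Q.hard ++ Q.soft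

/-- A feasible assignment: values in the domains, satisfying all hard constraints. -/
def Feasible (Q : CSPInstance n) (z : Fin n → ℝ) : Prop :=
  (∀ v, z v ∈ Q.dom v) ∧ ∀ C ∈ Q.hard, C.sat z

-- Configurations of a set `W` of variables: partial assignments (with `none`
-- playing the role of the symbol `λ`) defined exactly on `W`.
open Classical in
noncomputable def configs (Q : CSPInstance n) (W : Finset (Fin n)) :
    Finset (Fin n → Option ℝ) :=
  (Fintype.piFinset fun v =>
      if v ∈ W then (Q.dom v).image some else ({none} : Finset (Option ℝ))).filter
    (fun K => ∀ C ∈ Q.hard, C.scope ⊆ W → C.sat (fun v => (K v).getD 0))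

/-- Restriction `K↾_W` of a configuration: coordinates outside `W` are set to `λ`. -/
def restrictCfg (K : Fin n → Option ℝ) (W : Finset (Fin n)) : Fin n → Option ℝ :=
  fun v => if v ∈ W then K v else none

/-- A (rooted) nice tree: leaves, introduce nodes, forget nodes and join nodes. -/
inductive NiceTree (n : ℕ) : Type
  | leaf (v : Fin n) : NiceTree n
  | introduce (v : Fin n) (t : NiceTree n) : NiceTree n
  | forget (v : Fin n) (t : NiceTree n) : NiceTree n
  | join (t₁ t₂ : NiceTree n) : NiceTree n

namespace NiceTree

/-- The bag of the root node of a nice tree. -/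
def bag : NiceTree n → Finset (Fin n)
  | leaf v => {v}
  | introduce v t => insert v (bag t)
  | forget v t => (bag t).erase v
  | join t₁ _ => bag t₁

/-- All vertices appearing in bags of the tree. -/
def verts : NiceTree n → Finset (Fin n)
  | leaf v => {v}
  | introduce v t => insert v (verts t)
  | forget _ t => verts t
  | join t₁ t₂ => verts t₁ ∪ verts t₂

/-- Number of nodes of the tree. -/
def size : NiceTree n → ℕ
  | leaf _ => 1
  | introduce _ t => size t + 1
  | forget _ t => size t + 1
  | join t₁ t₂ => size t₁ + size t₂ + 1

/-- Structural validity of a nice tree (in particular, the connectivity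
condition of tree decompositions: an introduced vertex does not occur below,
and vertices shared by the two subtrees of a join lie in its bag). -/
def valid : NiceTree n → Prop
  | leaf _ => True
  | introduce v t => v ∉ verts t ∧ valid t
  | forget v t => v ∈ bag t ∧ valid t
  | join t₁ t₂ => bag t₁ = bag t₂ ∧ verts t₁ ∩ verts t₂ ⊆ bag t₁ ∧ valid t₁ ∧ valid t₂

/-- `isSubtree s t`: `s` is a node (subtree) of `t`. -/
def isSubtree (s : NiceTree n) : NiceTree n → Prop
  | leaf v => s = leaf v
  | introduce v t => s = introduce v t ∨ isSubtree s t
  | forget v t => s = forget v t ∨ isSubtree s t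
  | join t₁ t₂ => s = join t₁ t₂ ∨ isSubtree s t₁ ∨ isSubtree s t₂

-- The configurations relevant to the subtree: `ℛ(a) = ⋃_{b ∈ T(a)} 𝒦(B(b))`.
open Classical in
noncomputable def relConfigs (Q : CSPInstance n) : NiceTree n → Finset (Fin n → Option ℝ)
  | leaf v => configs Q {v}
  | introduce v t => configs Q (insert v (bag t)) ∪ relConfigs Q t
  | forget v t => configs Q ((bag t).erase v) ∪ relConfigs Q t
  | join t₁ t₂ => relConfigs Q t₁ ∪ relConfigs Q t₂

end NiceTree

/-- A valid nice tree decomposition for the CSP instance `Q`: every variable is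
in some bag and every constraint scope is contained in some bag. -/
def IsNiceTreeDecompCSP (Q : CSPInstance n) (T : NiceTree n) : Prop :=
  T.valid ∧ (∀ v : Fin n, v ∈ T.verts) ∧
    ∀ C ∈ consList Q, ∃ s : NiceTree n, s.isSubtree T ∧ C.scope ⊆ s.bag

/-- A valid nice tree decomposition of a graph `G`: every vertex is in some bag
and both endpoints of every edge lie in a common bag. -/
def IsNiceTreeDecompGraph (G : SimpleGraph (Fin n)) (T : NiceTree n) : Prop :=
  T.valid ∧ (∀ v : Fin n, v ∈ T.verts) ∧
    ∀ u v : Fin n, G.Adj u v → ∃ s : NiceTree n, s.isSubtree T ∧ u ∈ s.bag ∧ v ∈ s.bag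

/-- The constraint graph of a CSP instance. -/
def constraintGraph (Q : CSPInstance n) : SimpleGraph (Fin n) where
  Adj u v := u ≠ v ∧ ∃ C ∈ consList Q, u ∈ C.scope ∧ v ∈ C.scope
  symm := by
    constructor
    rintro u v ⟨hne, C, hC, hu, hv⟩
    exact ⟨hne.symm, C, hC, hv, hu⟩
  loopless := by
    constructor
    rintro v ⟨hne, -⟩
    exact hne rfl

-- The LP constraints of `P(Q)` relevant to the subtree `t`: bag equations and
-- consistency equations at introduce and forget nodes of `t`.
def RelCons (Q : CSPInstance n) (f : (Fin n → Option ℝ) → ℝ) : NiceTree n → Prop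
  | .leaf v => ∑ K ∈ configs Q {v}, f K = 1
  | .introduce v t =>
      RelCons Q f t ∧ (∑ K ∈ configs Q (insert v t.bag), f K = 1) ∧
      ∀ K ∈ configs Q t.bag,
        ∑ K' ∈ (configs Q (insert v t.bag)).filter
            (fun K' => restrictCfg K' t.bag = K), f K' = f K
  | .forget v t =>
      RelCons Q f t ∧ (∑ K ∈ configs Q (t.bag.erase v), f K = 1) ∧
      ∀ K ∈ configs Q (t.bag.erase v),
        ∑ K' ∈ (configs Q t.bag).filter
            (fun K' => restrictCfg K' (t.bag.erase v) = K), f K' = f K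
  | .join t₁ t₂ => RelCons Q f t₁ ∧ RelCons Q f t₂

/-- All the constraints of `P(Q)` relevant to the subtree `t`, including the
bounds `0 ≤ f(K) ≤ 1` for relevant configurations. -/
def RelevantLP (Q : CSPInstance n) (t : NiceTree n) (f : (Fin n → Option ℝ) → ℝ) : Prop :=
  RelCons Q f t ∧ ∀ K ∈ t.relConfigs Q, 0 ≤ f K ∧ f K ≤ 1

/-- The polytope `P(Q) ⊆ ℝ^{𝒦_ℬ}` (coordinates outside `𝒦_ℬ` are zero). -/
def Ppoly (Q : CSPInstance n) (T : NiceTree n) : Set ((Fin n → Option ℝ) → ℝ) :=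
  {f | RelevantLP Q T f ∧ ∀ K, K ∉ T.relConfigs Q → f K = 0}

/-- Extended feasible assignments `(z, h)`. -/
def ExtAssignments (Q : CSPInstance n) :
    Set ((Fin n → ℝ) × (Fin Q.soft.length → ℝ)) :=
  {p | Feasible Q p.1 ∧ ∀ i : Fin Q.soft.length,
      ((Q.soft.get i).sat p.1 ∧ p.2 i = 1) ∨ (¬ (Q.soft.get i).sat p.1 ∧ p.2 i = 0)}

/-- `CSP(Q)`: the convex hull of all extended feasible assignments. -/
def CSPpolytope (Q : CSPInstance n) : Set ((Fin n → ℝ) × (Fin Q.soft.length → ℝ)) :=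
  convexHull ℝ (ExtAssignments Q)

/-- `CSP'(Q)`: the convex hull of all feasible assignments. -/
def CSPpolytope' (Q : CSPInstance n) : Set (Fin n → ℝ) :=
  convexHull ℝ {z | Feasible Q z}

/-- The `y`-variables of the basic LP: one for each `v ∈ V` and `i ∈ D_v`. -/
abbrev YType (Q : CSPInstance n) := (v : Fin n) → {i : ℝ // i ∈ Q.dom v} → ℝ

/-- The `g`-variables of the basic LP: one for each constraint `C_U ∈ 𝒞 ∪ ℋ`
and each configuration `K ∈ 𝒦(U)`. -/
abbrev GType (Q : CSPInstance n) :=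
  (c : Fin (consList Q).length) →
    {K : Fin n → Option ℝ // K ∈ configs Q ((consList Q).get c).scope} → ℝ

/-- The basic LP (1)–(3). -/
def BasicLP (Q : CSPInstance n) (p : YType Q × GType Q) : Prop :=
  (∀ v : Fin n, ∑ i ∈ (Q.dom v).attach, p.1 v i = 1) ∧
  (∀ c : Fin (consList Q).length, ∀ v ∈ ((consList Q).get c).scope,
    ∀ (i : ℝ) (hi : i ∈ Q.dom v),
      ∑ K ∈ (configs Q ((consList Q).get c).scope).attach.filter
          (fun K => K.1 v = some i), p.2 c K = p.1 v ⟨i, hi⟩) ∧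
  (∀ v i, 0 ≤ p.1 v i ∧ p.1 v i ≤ 1) ∧ (∀ c K, 0 ≤ p.2 c K ∧ p.2 c K ≤ 1)

/-- Integrality (all coordinates in `{0,1}`) of a `(y, g)` vector. -/
def IntegralYG (Q : CSPInstance n) (p : YType Q × GType Q) : Prop :=
  (∀ v i, p.1 v i = 0 ∨ p.1 v i = 1) ∧ ∀ c K, p.2 c K = 0 ∨ p.2 c K = 1

-- The map sending a (feasible) assignment `z` to the `(y, g)` vector of the basic LP.
open Classical in
noncomputable def exMap (Q : CSPInstance n) (z : Fin n → ℝ) : YType Q × GType Q :=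
  (fun v i => if z v = i.1 then 1 else 0,
   fun c K => if ∀ u ∈ ((consList Q).get c).scope, K.1 u = some (z u) then 1 else 0)

/-!
At the forget node the binary vectors `I_i` are kept on `ℛ(b)` and extended to the new bag
`B(c) = B(b) \ {v}` by their marginals `J_i(K) = Σ_{K'↾B(c) = K} I_i(K')`. Taking marginals is
linear and `f` satisfies the forget equations, so the `J_i` still average to `f`.

The delicate configurations are those `K ∈ 𝒦(B(c))` already in `ℛ(b)`, i.e. in the bag of a node
`s` below `b` with `B(s) = B(c)`: there the marginal of `I_i` has to equal `I_i(K)`. A binary vector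
satisfying the constraints of `T(b)` selects exactly one configuration in every bag, and along any
path down the tree the selected configurations agree on common variables, since an introduced
variable never occurs below its introduce node. Hence the selection at `s` is the restriction of
the selection at `b`, which is exactly the statement that the marginal equals `I_i(K)`.
-/

open Finset

section Binary

variable {α : Type*} {s t : Finset α} {g : α → ℝ}

lemma exists_eq_one_of_sum_eq_one (hg : ∀ x, g x = 0 ∨ g x = 1) (h : ∑ x ∈ s, g x = 1) :
    ∃ x ∈ s, g x = 1 := by
  by_contra! hne
  have : ∑ x ∈ s, g x = 0 := sum_eq_zero fun x hx => (hg x).resolve_right (hne x hx)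
  linarith

lemma one_le_sum_of_eq_one (hg : ∀ x, g x = 0 ∨ g x = 1) {x : α} (hx : x ∈ s) (hgx : g x = 1) :
    1 ≤ ∑ y ∈ s, g y :=
  hgx ▸ single_le_sum (f := g) (fun y _ => by rcases hg y with h | h <;> simp [h]) hx

lemma eq_of_sum_eq_one (hg : ∀ x, g x = 0 ∨ g x = 1) (h : ∑ x ∈ s, g x = 1) {x y : α}
    (hx : x ∈ s) (hy : y ∈ s) (hgx : g x = 1) (hgy : g y = 1) : x = y := by
  by_contra hne
  have := add_le_sum (f := g) (fun z _ => by rcases hg z with h | h <;> simp [h]) hx hy hne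
  linarith

lemma sum_subset_eq_ite_of_sum_eq_one [DecidableEq α] (hg : ∀ x, g x = 0 ∨ g x = 1)
    (h : ∑ x ∈ s, g x = 1) {x : α} (hx : x ∈ s) (hgx : g x = 1) (hts : t ⊆ s) :
    ∑ y ∈ t, g y = if x ∈ t then 1 else 0 := by
  have hzero : ∀ y ∈ t, y ≠ x → g y = 0 := fun y hy hyx =>
    (hg y).resolve_right fun hgy => hyx (eq_of_sum_eq_one hg h (hts hy) hx hgy hgx)
  split_ifs with hxt
  · rw [sum_eq_single_of_mem x hxt hzero, hgx]
  · exact sum_eq_zero fun y hy => hzero y hy (ne_of_mem_of_not_mem hy hxt)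

end Binary

section Configs

variable {Q : CSPInstance n} {W W' : Finset (Fin n)} {K K' : Fin n → Option ℝ} {u : Fin n}

lemma apply_eq_none_of_mem_configs (hK : K ∈ configs Q W) (hu : u ∉ W) : K u = none := by
  classical
  have h := (Fintype.mem_piFinset.mp (mem_filter.mp hK).1) u
  simpa [if_neg hu] using h

lemma apply_ne_none_of_mem_configs (hK : K ∈ configs Q W) (hu : u ∈ W) : K u ≠ none := by
  classical
  have h := (Fintype.mem_piFinset.mp (mem_filter.mp hK).1) u
  rw [if_pos hu] at h
  obtain ⟨r, -, hr⟩ := mem_image.mp h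
  exact hr ▸ Option.some_ne_none r

lemma eq_of_mem_configs (hK : K ∈ configs Q W) (hK' : K ∈ configs Q W') : W = W' := by
  ext u
  exact ⟨fun hu => by_contra fun hu' => apply_ne_none_of_mem_configs hK hu
      (apply_eq_none_of_mem_configs hK' hu'),
    fun hu => by_contra fun hu' => apply_ne_none_of_mem_configs hK' hu
      (apply_eq_none_of_mem_configs hK hu')⟩

lemma restrictCfg_mem_configs (hWW' : W ⊆ W') (hK : K ∈ configs Q W') :
    restrictCfg K W ∈ configs Q W := by
  classical
  simp only [configs, mem_filter, Fintype.mem_piFinset] at hK ⊢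
  refine ⟨fun u => ?_, fun C hC hCW =>
    C.sat_congr _ _ (fun u hu => ?_) (hK.2 C hC (hCW.trans hWW'))⟩
  · by_cases hu : u ∈ W
    · simpa [restrictCfg, hu, hWW' hu] using hK.1 u
    · simp [restrictCfg, hu]
  · simp [restrictCfg, hCW hu]

lemma restrictCfg_eq_of_agree (hK : K ∈ configs Q W) (h : ∀ u ∈ W, K u = K' u) :
    restrictCfg K' W = K := by
  funext u
  by_cases hu : u ∈ W
  · simp [restrictCfg, hu, h u hu]
  · simp [restrictCfg, hu, apply_eq_none_of_mem_configs hK hu]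

end Configs

namespace NiceTree

theorem isSubtree.inherit {P : NiceTree n → Prop}
    (hintro : ∀ v t, P (introduce v t) → P t) (hforget : ∀ v t, P (forget v t) → P t)
    (hjoin₁ : ∀ t₁ t₂, P (join t₁ t₂) → P t₁) (hjoin₂ : ∀ t₁ t₂, P (join t₁ t₂) → P t₂) :
    ∀ {s t : NiceTree n}, s.isSubtree t → P t → P s
  | _, leaf _, rfl, hP => hP
  | _, introduce _ _, .inl rfl, hP => hP
  | _, introduce v t, .inr hs, hP =>
    isSubtree.inherit hintro hforget hjoin₁ hjoin₂ hs (hintro v t hP)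
  | _, forget _ _, .inl rfl, hP => hP
  | _, forget v t, .inr hs, hP =>
    isSubtree.inherit hintro hforget hjoin₁ hjoin₂ hs (hforget v t hP)
  | _, join _ _, .inl rfl, hP => hP
  | _, join t₁ t₂, .inr (.inl hs), hP =>
    isSubtree.inherit hintro hforget hjoin₁ hjoin₂ hs (hjoin₁ t₁ t₂ hP)
  | _, join t₁ t₂, .inr (.inr hs), hP =>
    isSubtree.inherit hintro hforget hjoin₁ hjoin₂ hs (hjoin₂ t₁ t₂ hP)

theorem valid_of_isSubtree {s t : NiceTree n} (hs : s.isSubtree t) (ht : t.valid) : s.valid :=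
  hs.inherit (fun _ _ h => h.2) (fun _ _ h => h.2) (fun _ _ h => h.2.2.1) (fun _ _ h => h.2.2.2) ht

theorem verts_subset_of_isSubtree {s t : NiceTree n} (hs : s.isSubtree t) : s.verts ⊆ t.verts :=
  hs.inherit (P := fun r => r.verts ⊆ t.verts)
    (fun v _ h => (subset_insert v _).trans h) (fun _ _ h => h)
    (fun _ _ h => subset_union_left.trans h) (fun _ _ h => subset_union_right.trans h) subset_rfl

theorem bag_subset_verts : ∀ t : NiceTree n, t.bag ⊆ t.verts
  | leaf _ => subset_rfl
  | introduce v t => insert_subset_insert v t.bag_subset_verts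
  | forget v t => (erase_subset v t.bag).trans t.bag_subset_verts
  | join t₁ _ => t₁.bag_subset_verts.trans subset_union_left

theorem configs_bag_subset_relConfigs (Q : CSPInstance n) :
    ∀ t : NiceTree n, configs Q t.bag ⊆ t.relConfigs Q
  | leaf _ => subset_rfl
  | introduce _ _ => subset_union_left
  | forget _ _ => subset_union_left
  | join t₁ _ => (configs_bag_subset_relConfigs Q t₁).trans subset_union_left

theorem exists_isSubtree_of_mem_relConfigs {Q : CSPInstance n} {K : Fin n → Option ℝ} :
    ∀ {t : NiceTree n}, K ∈ t.relConfigs Q → ∃ s : NiceTree n, s.isSubtree t ∧ K ∈ configs Q s.bag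
  | leaf _, hK => ⟨_, rfl, hK⟩
  | introduce _ _, hK => (mem_union.mp hK).elim (fun h => ⟨_, .inl rfl, h⟩)
      fun h => (exists_isSubtree_of_mem_relConfigs h).imp fun _ ⟨hs, hKs⟩ => ⟨.inr hs, hKs⟩
  | forget _ _, hK => (mem_union.mp hK).elim (fun h => ⟨_, .inl rfl, h⟩)
      fun h => (exists_isSubtree_of_mem_relConfigs h).imp fun _ ⟨hs, hKs⟩ => ⟨.inr hs, hKs⟩
  | join _ _, hK => (mem_union.mp hK).elim
      (fun h => (exists_isSubtree_of_mem_relConfigs h).imp fun _ ⟨hs, hKs⟩ => ⟨.inr (.inl hs), hKs⟩)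
      fun h => (exists_isSubtree_of_mem_relConfigs h).imp fun _ ⟨hs, hKs⟩ => ⟨.inr (.inr hs), hKs⟩

end NiceTree

section RelCons

open NiceTree

variable {Q : CSPInstance n} {f g I : (Fin n → Option ℝ) → ℝ}

theorem RelCons.sum_bag_eq_one : ∀ {t : NiceTree n}, RelCons Q f t → ∑ K ∈ configs Q t.bag, f K = 1
  | .leaf _, h => h
  | .introduce _ _, h => h.2.1
  | .forget _ _, h => h.2.1
  | .join t₁ _, h => sum_bag_eq_one (t := t₁) h.1

theorem RelCons.of_isSubtree {s t : NiceTree n} (hs : s.isSubtree t) (h : RelCons Q f t) :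
    RelCons Q f s :=
  hs.inherit (fun _ _ h => h.1) (fun _ _ h => h.1) (fun _ _ h => h.1) (fun _ _ h => h.2) h

theorem RelCons.congr : ∀ {t : NiceTree n}, (∀ K ∈ t.relConfigs Q, f K = g K) →
    RelCons Q f t → RelCons Q g t
  | .leaf _, hfg, h => (sum_congr rfl hfg).symm.trans h
  | .introduce v t, hfg, ⟨h, hsum, hmarg⟩ => by
    have hbag : ∀ K ∈ configs Q (insert v t.bag), f K = g K := fun K hK =>
      hfg K (mem_union_left _ hK)
    have hchild : ∀ K ∈ t.relConfigs Q, f K = g K := fun K hK => hfg K (mem_union_right _ hK)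
    refine ⟨h.congr hchild, (sum_congr rfl hbag).symm.trans hsum, fun K hK => ?_⟩
    rw [← hchild K (configs_bag_subset_relConfigs Q t hK), ← hmarg K hK]
    exact sum_congr rfl fun K' hK' => (hbag K' (mem_filter.mp hK').1).symm
  | .forget v t, hfg, ⟨h, hsum, hmarg⟩ => by
    have hbag : ∀ K ∈ configs Q (t.bag.erase v), f K = g K := fun K hK =>
      hfg K (mem_union_left _ hK)
    have hchild : ∀ K ∈ t.relConfigs Q, f K = g K := fun K hK => hfg K (mem_union_right _ hK)
    refine ⟨h.congr hchild, (sum_congr rfl hbag).symm.trans hsum, fun K hK => ?_⟩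
    rw [← hbag K hK, ← hmarg K hK]
    exact sum_congr rfl fun K' hK' =>
      (hchild K' (configs_bag_subset_relConfigs Q t (mem_filter.mp hK').1)).symm
  | .join _ _, hfg, ⟨h₁, h₂⟩ =>
    ⟨h₁.congr fun K hK => hfg K (mem_union_left _ hK),
      h₂.congr fun K hK => hfg K (mem_union_right _ hK)⟩

theorem RelCons.apply_eq_of_isSubtree (hI : ∀ K, I K = 0 ∨ I K = 1) {t : NiceTree n} :
    t.valid → RelCons Q I t → ∀ {s : NiceTree n}, s.isSubtree t →
    ∀ {K K' : Fin n → Option ℝ}, K ∈ configs Q s.bag → I K = 1 → K' ∈ configs Q t.bag →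
    I K' = 1 → ∀ {u : Fin n}, u ∈ s.bag → u ∈ t.bag → K u = K' u := by
  induction t with
  | leaf w =>
    rintro - h s rfl K K' hK hIK hK' hIK' u - -
    rw [eq_of_sum_eq_one hI h.sum_bag_eq_one hK hK' hIK hIK']
  | introduce w t ih =>
    rintro ⟨hw, ht⟩ h s (rfl | hs) K K' hK hIK hK' hIK' u hus hut
    · rw [eq_of_sum_eq_one hI h.sum_bag_eq_one hK hK' hIK hIK']
    have hut₀ : u ∈ t.bag := (mem_insert.mp hut).resolve_left fun huw =>
      hw (huw ▸ verts_subset_of_isSubtree hs (bag_subset_verts s hus))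
    have hK'₀ := restrictCfg_mem_configs (subset_insert w t.bag) hK'
    have hIK'₀ : I (restrictCfg K' t.bag) = 1 := by
      have hfib : K' ∈ (configs Q (insert w t.bag)).filter
          fun K'' => restrictCfg K'' t.bag = restrictCfg K' t.bag := mem_filter.mpr ⟨hK', rfl⟩
      have := (one_le_sum_of_eq_one hI hfib hIK').trans_eq (h.2.2 _ hK'₀)
      exact (hI _).resolve_left fun h0 => by linarith
    rw [ih ht h.1 hs hK hIK hK'₀ hIK'₀ hus hut₀]
    simp [restrictCfg, hut₀]
  | forget w t ih =>
    rintro ⟨-, ht⟩ h s (rfl | hs) K K' hK hIK hK' hIK' u hus hut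
    · rw [eq_of_sum_eq_one hI h.sum_bag_eq_one hK hK' hIK hIK']
    obtain ⟨K'', hK''fib, hIK''⟩ := exists_eq_one_of_sum_eq_one hI ((h.2.2 K' hK').trans hIK')
    obtain ⟨hK'', rfl⟩ := mem_filter.mp hK''fib
    rw [ih ht h.1 hs hK hIK hK'' hIK'' hus (mem_of_mem_erase hut)]
    simp [restrictCfg, show u ∈ t.bag.erase w from hut]
  | join t₁ t₂ ih₁ ih₂ =>
    rintro ⟨hbag, -, ht₁, ht₂⟩ h s (rfl | hs | hs) K K' hK hIK hK' hIK' u hus hut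
    · rw [eq_of_sum_eq_one hI h.sum_bag_eq_one hK hK' hIK hIK']
    · exact ih₁ ht₁ h.1 hs hK hIK hK' hIK' hus hut
    · exact ih₂ ht₂ h.2 hs hK hIK (hbag ▸ hK') hIK' hus (hbag ▸ hut)

end RelCons

section Marginal

open NiceTree

variable {Q : CSPInstance n} {f I : (Fin n → Option ℝ) → ℝ}

noncomputable def marginal (Q : CSPInstance n) (W' W : Finset (Fin n))
    (f : (Fin n → Option ℝ) → ℝ) (K : Fin n → Option ℝ) : ℝ :=
  ∑ K' ∈ (configs Q W').filter (fun K' => restrictCfg K' W = K), f K'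

theorem marginal_eq_mul_sum_marginal {ι : Type*} (s : Finset ι) (c : ℝ)
    {I : ι → (Fin n → Option ℝ) → ℝ} {W' W : Finset (Fin n)}
    (hf : ∀ K ∈ configs Q W', f K = c * ∑ i ∈ s, I i K)
    (K : Fin n → Option ℝ) : marginal Q W' W f K = c * ∑ i ∈ s, marginal Q W' W (I i) K := by
  rw [marginal, sum_congr rfl fun K' hK' => hf K' (mem_filter.mp hK').1, ← mul_sum, sum_comm]
  rfl

theorem RelCons.marginal_eq_zero_or_one (hI : ∀ K, I K = 0 ∨ I K = 1) {t : NiceTree n}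
    (h : RelCons Q I t) (W : Finset (Fin n)) (K : Fin n → Option ℝ) :
    marginal Q t.bag W I K = 0 ∨ marginal Q t.bag W I K = 1 := by
  classical
  obtain ⟨K₀, hK₀, hIK₀⟩ := exists_eq_one_of_sum_eq_one hI h.sum_bag_eq_one
  rw [marginal, sum_subset_eq_ite_of_sum_eq_one hI h.sum_bag_eq_one hK₀ hIK₀ (filter_subset _ _)]
  split_ifs <;> simp

theorem RelCons.marginal_eq (hI : ∀ K, I K = 0 ∨ I K = 1) {b : NiceTree n} (hb : b.valid)
    (h : RelCons Q I b) {W : Finset (Fin n)} (hW : W ⊆ b.bag) {K : Fin n → Option ℝ}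
    (hKb : K ∈ b.relConfigs Q) (hKW : K ∈ configs Q W) : marginal Q b.bag W I K = I K := by
  classical
  obtain ⟨s, hs, hKs⟩ := exists_isSubtree_of_mem_relConfigs hKb
  have hsW : s.bag = W := eq_of_mem_configs hKs hKW
  subst hsW
  have hs1 := (h.of_isSubtree hs).sum_bag_eq_one
  obtain ⟨K₀, hK₀, hIK₀⟩ := exists_eq_one_of_sum_eq_one hI h.sum_bag_eq_one
  obtain ⟨K₁, hK₁, hIK₁⟩ := exists_eq_one_of_sum_eq_one hI hs1
  have hK₁₀ : restrictCfg K₀ s.bag = K₁ := restrictCfg_eq_of_agree hK₁ fun u hu =>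
    h.apply_eq_of_isSubtree hI hb hs hK₁ hIK₁ hK₀ hIK₀ hu (hW hu)
  have hIK : I K = if K₁ ∈ ({K} : Finset _) then 1 else 0 := by
    rw [← sum_singleton I K]
    exact sum_subset_eq_ite_of_sum_eq_one hI hs1 hK₁ hIK₁ (singleton_subset_iff.mpr hKs)
  rw [marginal, sum_subset_eq_ite_of_sum_eq_one hI h.sum_bag_eq_one hK₀ hIK₀ (filter_subset _ _),
    hIK]
  simp [hK₀, hK₁₀]

end Marginal

section ForgetExtend

open NiceTree

variable {Q : CSPInstance n} {I : (Fin n → Option ℝ) → ℝ} {b : NiceTree n} {v : Fin n}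

noncomputable def forgetExtend (Q : CSPInstance n) (b : NiceTree n) (v : Fin n)
    (I : (Fin n → Option ℝ) → ℝ) (K : Fin n → Option ℝ) : ℝ :=
  if K ∈ configs Q (b.bag.erase v) then marginal Q b.bag (b.bag.erase v) I K else I K

theorem forgetExtend_eq_zero_or_one (hI : ∀ K, I K = 0 ∨ I K = 1) (h : RelCons Q I b)
    (K : Fin n → Option ℝ) : forgetExtend Q b v I K = 0 ∨ forgetExtend Q b v I K = 1 := by
  unfold forgetExtend
  split_ifs
  exacts [h.marginal_eq_zero_or_one hI _ K, hI K]

theorem forgetExtend_eq_of_mem_relConfigs (hI : ∀ K, I K = 0 ∨ I K = 1) (hb : b.valid)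
    (h : RelCons Q I b) {K : Fin n → Option ℝ} (hK : K ∈ b.relConfigs Q) :
    forgetExtend Q b v I K = I K := by
  unfold forgetExtend
  split_ifs with hKv
  exacts [h.marginal_eq hI hb (erase_subset v b.bag) hK hKv, rfl]

theorem relevantLP_forget_forgetExtend (hI : ∀ K, I K = 0 ∨ I K = 1) (hb : b.valid)
    (h : RelCons Q I b) : RelevantLP Q (forget v b) (forgetExtend Q b v I) := by
  have hJI : ∀ K ∈ b.relConfigs Q, I K = forgetExtend Q b v I K := fun K hK =>
    (forgetExtend_eq_of_mem_relConfigs hI hb h hK).symm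
  have hmarg : ∀ K ∈ configs Q (b.bag.erase v),
      forgetExtend Q b v I K = marginal Q b.bag (b.bag.erase v) I K := fun K hK => if_pos hK
  refine ⟨⟨h.congr hJI, ?_, fun K hK => ?_⟩, fun K _ => ?_⟩
  · calc ∑ K ∈ configs Q (b.bag.erase v), forgetExtend Q b v I K
        = ∑ K ∈ configs Q (b.bag.erase v), marginal Q b.bag (b.bag.erase v) I K :=
          sum_congr rfl hmarg
      _ = ∑ K ∈ configs Q b.bag, I K :=
          sum_fiberwise_of_maps_to (fun K hK => restrictCfg_mem_configs (erase_subset v _) hK) I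
      _ = 1 := h.sum_bag_eq_one
  · rw [hmarg K hK, marginal]
    exact sum_congr rfl fun K' hK' =>
      (hJI K' (configs_bag_subset_relConfigs Q b (mem_filter.mp hK').1)).symm
  · rcases forgetExtend_eq_zero_or_one hI h K (v := v) with h | h <;> simp [h]

theorem eq_mul_sum_forgetExtend {ι : Type*} (s : Finset ι) (c : ℝ) {f : (Fin n → Option ℝ) → ℝ}
    {I : ι → (Fin n → Option ℝ) → ℝ} (hfb : ∀ K ∈ b.relConfigs Q, f K = c * ∑ i ∈ s, I i K)
    (hf : ∀ K ∈ configs Q (b.bag.erase v), marginal Q b.bag (b.bag.erase v) f K = f K)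
    {K : Fin n → Option ℝ} (hK : K ∈ (forget v b).relConfigs Q) :
    f K = c * ∑ i ∈ s, forgetExtend Q b v (I i) K := by
  by_cases hKv : K ∈ configs Q (b.bag.erase v)
  · rw [← hf K hKv, marginal_eq_mul_sum_marginal s c
      (fun K' hK' => hfb K' (configs_bag_subset_relConfigs Q b hK'))]
    simp only [forgetExtend, if_pos hKv]
  · simp only [forgetExtend, if_neg hKv]
    exact hfb K ((mem_union.mp hK).resolve_left hKv)

end ForgetExtend

theorem forget_step_general (n : ℕ) (Q : CSPInstance n) (T : NiceTree n)
    (hT : IsNiceTreeDecompCSP Q T) (v : Fin n) (b : NiceTree n)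
    (hsub : (NiceTree.forget v b).isSubtree T)
    (f : (Fin n → Option ℝ) → ℝ) (hf : f ∈ Ppoly Q T)
    (M : ℕ)
    (I : Fin M → ((Fin n → Option ℝ) → ℝ))
    (hIbin : ∀ i K, I i K = 0 ∨ I i K = 1)
    (hIrel : ∀ i, RelevantLP Q b (I i))
    (hIavg : ∀ K ∈ b.relConfigs Q, f K = (1 / (M : ℝ)) * ∑ i, I i K) :
    ∃ J : Fin M → ((Fin n → Option ℝ) → ℝ),
      (∀ i K, J i K = 0 ∨ J i K = 1) ∧
      (∀ i, RelevantLP Q (NiceTree.forget v b) (J i)) ∧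
      ∀ K ∈ (NiceTree.forget v b).relConfigs Q,
        f K = (1 / (M : ℝ)) * ∑ i, J i K := by
  have hb : b.valid := (NiceTree.valid_of_isSubtree hsub hT.1).2
  have hfc : RelCons Q f (.forget v b) := hf.1.1.of_isSubtree hsub
  exact ⟨fun i => forgetExtend Q b v (I i),
    fun i => forgetExtend_eq_zero_or_one (hIbin i) (hIrel i).1,
    fun i => relevantLP_forget_forgetExtend (hIbin i) hb (hIrel i).1,
    fun K hK => eq_mul_sum_forgetExtend univ _ hIavg hfc.2.2 hK⟩

/-- Inductive step at a forget node. -/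
theorem forget_step (n : ℕ) (Q : CSPInstance n) (T : NiceTree n)
    (hT : IsNiceTreeDecompCSP Q T) (v : Fin n) (b : NiceTree n)
    (hv : v ∈ b.bag)
    (hsub : (NiceTree.forget v b).isSubtree T)
    (f : (Fin n → Option ℝ) → ℝ) (hf : f ∈ Ppoly Q T)
    (M : ℕ) (hM : 0 < M)
    (hint : ∀ K ∈ (NiceTree.forget v b).relConfigs Q, ∃ k : ℤ, (M : ℝ) * f K = (k : ℝ))
    (I : Fin M → ((Fin n → Option ℝ) → ℝ))
    (hIbin : ∀ i K, I i K = 0 ∨ I i K = 1)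
    (hIrel : ∀ i, RelevantLP Q b (I i))
    (hIavg : ∀ K ∈ b.relConfigs Q, f K = (1 / (M : ℝ)) * ∑ i, I i K) :
    ∃ J : Fin M → ((Fin n → Option ℝ) → ℝ),
      (∀ i K, J i K = 0 ∨ J i K = 1) ∧
      (∀ i, RelevantLP Q (NiceTree.forget v b) (J i)) ∧
      ∀ K ∈ (NiceTree.forget v b).relConfigs Q,
        f K = (1 / (M : ℝ)) * ∑ i, J i K :=
  forget_step_general n Q T hT v b hsub f hf M I hIbin hIrel hIavg
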